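/- arXiv:2603.24234 — 4 statements merged into one kernel-verified Lean document; each statement's English description precedes it below -/
import Mathlib

section
/- Let ρ:(0,∞)→(0,∞) be strictly monotone and C¹, and define f(x) = (x/|x|)ρ(|x|) for x ≠ 0 on ℝⁿ. Then for almost every x ≠ 0, the operator norm of the derivative satisfies |Df(x)| = max{ρ(|x|)/|x|, |ρ'(|x|)|} and the Jacobian determinant satisfies J_f(x) = ρ'(|x|)·(ρ(|x|)/|x|)^{n-1}. -/
/-!
With `r = ‖x‖`, `u = x / r` and `φ(t) = ρ(t) / t`, the derivative of `y ↦ φ(‖y‖) y` at `x ≠ 0` is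
`φ(r) id + r φ'(r) u ⊗ u`, and `r φ'(r) = ρ'(r) - φ(r)`: it multiplies by `ρ'(r)` along `u` and by
`ρ(r) / r` on `uᗮ`. Pythagoras in the decomposition `ℝ u ⊕ uᗮ` gives the operator norm, once
`n ≥ 2` provides a unit vector in `uᗮ`, and an orthonormal basis containing `u` diagonalises the
derivative, which gives the Jacobian.
-/

open MeasureTheory Set Module
open scoped RealInnerProductSpace

section RadialCLM

variable {E : Type*} [NormedAddCommGroup E] [InnerProductSpace ℝ E]

noncomputable def radialCLM (a b : ℝ) (u : E) : E →L[ℝ] E :=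
  a • ContinuousLinearMap.id ℝ E + (b - a) • (innerSL ℝ u).smulRight u

theorem radialCLM_apply (a b : ℝ) (u w : E) :
    radialCLM a b u w = a • w + ((b - a) * ⟪u, w⟫) • u := by
  simp [radialCLM, mul_smul]

theorem radialCLM_apply_self (a b : ℝ) {u : E} (hu : ‖u‖ = 1) : radialCLM a b u u = b • u := by
  rw [radialCLM_apply, real_inner_self_eq_norm_sq, hu, ← add_smul]
  ring_nf

theorem radialCLM_apply_of_inner_eq_zero (a b : ℝ) {u w : E} (h : ⟪u, w⟫ = 0) :
    radialCLM a b u w = a • w := by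
  simp [radialCLM_apply, h]

theorem norm_radialCLM_le (a b : ℝ) {u : E} (hu : ‖u‖ = 1) :
    ‖radialCLM a b u‖ ≤ max |a| |b| := by
  set M := max |a| |b|
  refine ContinuousLinearMap.opNorm_le_bound _ (le_max_of_le_left (abs_nonneg a)) fun w => ?_
  set p := ⟪u, w⟫
  set v := w - p • u
  have hvu : ⟪v, u⟫ = 0 := by
    rw [inner_sub_left, real_inner_smul_left, real_inner_comm, real_inner_self_eq_norm_sq, hu]
    ring
  have pyth (c d : ℝ) : ‖c • v + d • u‖ ^ 2 = c ^ 2 * ‖v‖ ^ 2 + d ^ 2 := by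
    have h := norm_add_sq_eq_norm_sq_add_norm_sq_real
      (x := c • v) (y := d • u) (by rw [real_inner_smul_left, real_inner_smul_right, hvu]; ring)
    rw [← sq, ← sq, ← sq, norm_smul, norm_smul, hu] at h
    simpa [mul_pow] using h
  have hDw : radialCLM a b u w = a • v + (b * p) • u := by
    rw [radialCLM_apply]; module
  have hw : w = (1 : ℝ) • v + p • u := by module
  have ha : a ^ 2 ≤ M ^ 2 := sq_abs a ▸ pow_le_pow_left₀ (abs_nonneg a) (le_max_left _ _) 2
  have hb : b ^ 2 ≤ M ^ 2 := sq_abs b ▸ pow_le_pow_left₀ (abs_nonneg b) (le_max_right _ _) 2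
  have hsq : ‖radialCLM a b u w‖ ^ 2 ≤ (M * ‖w‖) ^ 2 := by
    rw [hDw, mul_pow, hw, pyth, pyth, mul_pow]
    nlinarith [mul_le_mul_of_nonneg_right ha (sq_nonneg ‖v‖),
      mul_le_mul_of_nonneg_right hb (sq_nonneg p)]
  exact (pow_le_pow_iff_left₀ (norm_nonneg _) (by positivity) two_ne_zero).1 hsq

theorem norm_radialCLM (a b : ℝ) {u v : E} (hu : ‖u‖ = 1) (hv : ‖v‖ = 1) (huv : ⟪u, v⟫ = 0) :
    ‖radialCLM a b u‖ = max |a| |b| := by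
  refine le_antisymm (norm_radialCLM_le a b hu) (max_le ?_ ?_)
  · simpa [radialCLM_apply_of_inner_eq_zero a b huv, norm_smul, hv] using
      (radialCLM a b u).le_opNorm v
  · simpa [radialCLM_apply_self a b hu, norm_smul, hu] using (radialCLM a b u).le_opNorm u

theorem LinearMap.det_eq_prod_of_apply_basis_eq_smul {R M ι : Type*} [CommRing R] [AddCommGroup M]
    [Module R M] [Fintype ι] [DecidableEq ι] (B : Basis ι R M) {f : M →ₗ[R] M} {d : ι → R}
    (h : ∀ i, f (B i) = d i • B i) : LinearMap.det f = ∏ i, d i := by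
  have : LinearMap.toMatrix B B f = Matrix.diagonal d := by
    ext i j
    rcases eq_or_ne i j with rfl | hij
    · simp [LinearMap.toMatrix_apply, h]
    · simp [LinearMap.toMatrix_apply, h, hij]
  rw [← LinearMap.det_toMatrix B, this, Matrix.det_diagonal]

theorem det_radialCLM [FiniteDimensional ℝ E] (a b : ℝ) {u : E} (hu : ‖u‖ = 1) :
    LinearMap.det (radialCLM a b u : E →ₗ[ℝ] E) = b * a ^ (finrank ℝ E - 1) := by
  classical
  have hu' : Orthonormal ℝ ((↑) : ({u} : Set E) → E) :=
    orthonormal_subsingleton_iff.2 fun i => by rw [Set.mem_singleton_iff.1 i.2, hu]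
  obtain ⟨s, B, hus, hB⟩ := hu'.exists_orthonormalBasis_extension
  have hus : u ∈ s := hus rfl
  have heigen (i : s) :
      radialCLM a b u (B.toBasis i) = (if (i : E) = u then b else a) • B.toBasis i := by
    rw [OrthonormalBasis.coe_toBasis, hB]
    split_ifs with h
    · rw [h, radialCLM_apply_self a b hu]
    · refine radialCLM_apply_of_inner_eq_zero a b ?_
      simpa [hB] using B.orthonormal.2 (i := ⟨u, hus⟩) (j := i)
        (by simpa [Subtype.ext_iff, eq_comm] using h)
  rw [LinearMap.det_eq_prod_of_apply_basis_eq_smul B.toBasis heigen,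
    finrank_eq_card_basis B.toBasis, Finset.prod_coe_sort s (fun w => if w = u then b else a),
    ← Finset.mul_prod_erase s _ hus, if_pos rfl,
    Finset.prod_congr rfl fun w hw => if_neg (Finset.ne_of_mem_erase hw), Finset.prod_const,
    Finset.card_erase_of_mem hus, Fintype.card_coe]

theorem exists_norm_eq_one_inner_eq_zero [FiniteDimensional ℝ E] (hE : 2 ≤ finrank ℝ E) (u : E) :
    ∃ v : E, ‖v‖ = 1 ∧ ⟪u, v⟫ = 0 := by
  have hK := (ℝ ∙ u).finrank_add_finrank_orthogonal
  have hspan : finrank ℝ (ℝ ∙ u) ≤ 1 := by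
    simpa using finrank_span_le_card ({u} : Set E)
  obtain ⟨w, hw, hw0⟩ := Submodule.exists_mem_ne_zero_of_ne_bot
    (Submodule.one_le_finrank_iff.1 (by omega) : (ℝ ∙ u)ᗮ ≠ ⊥)
  refine ⟨‖w‖⁻¹ • w, norm_smul_inv_norm hw0, ?_⟩
  rw [real_inner_smul_right, Submodule.mem_orthogonal_singleton_iff_inner_right.1 hw, mul_zero]

theorem hasFDerivAt_norm_of_ne_zero {x : E} (hx : x ≠ 0) :
    HasFDerivAt (‖·‖) (‖x‖⁻¹ • innerSL ℝ x) x := by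
  have h := (hasStrictFDerivAt_norm_sq x).hasFDerivAt.sqrt (by positivity)
  simp only [Real.sqrt_sq (norm_nonneg _)] at h
  convert h using 1
  ext w
  simp only [smul_apply, coe_innerSL_apply, smul_eq_mul, one_div, mul_inv_rev, nsmul_eq_mul,
    Nat.cast_ofNat]
  field_simp

theorem hasFDerivAt_radial {ρ : ℝ → ℝ} {ρ' : ℝ} {x : E} (hx : x ≠ 0) (hρ : HasDerivAt ρ ρ' ‖x‖) :
    HasFDerivAt (fun y : E => (ρ ‖y‖ / ‖y‖) • y)
      (radialCLM (ρ ‖x‖ / ‖x‖) ρ' (‖x‖⁻¹ • x)) x := by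
  have hr : ‖x‖ ≠ 0 := norm_ne_zero_iff.2 hx
  have h := ((hρ.div (hasDerivAt_id _) hr).comp_hasFDerivAt x
    (hasFDerivAt_norm_of_ne_zero hx)).smul (hasFDerivAt_id x)
  refine h.congr_fderiv ?_
  ext w
  simp only [radialCLM_apply, real_inner_smul_left, smul_smul, Function.comp_apply, Pi.div_apply,
    id_eq, mul_one, add_apply, smul_apply, ContinuousLinearMap.id_apply,
    ContinuousLinearMap.smulRight_apply, coe_innerSL_apply,
    smul_eq_mul, add_right_inj]
  congr 1
  field_simp

end RadialCLM

theorem stmt0_general (n : ℕ) (hn : 2 ≤ n) (ρ : ℝ → ℝ)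
    (hρpos : ∀ r ∈ Set.Ioi (0 : ℝ), 0 < ρ r)
    (hρC1 : ContDiffOn ℝ 1 ρ (Set.Ioi 0))
    (f : EuclideanSpace ℝ (Fin n) → EuclideanSpace ℝ (Fin n))
    (hf : ∀ x : EuclideanSpace ℝ (Fin n), x ≠ 0 → f x = (ρ ‖x‖ / ‖x‖) • x) :
    ∀ᵐ x : EuclideanSpace ℝ (Fin n) ∂volume, x ≠ 0 →
      DifferentiableAt ℝ f x ∧
      ‖fderiv ℝ f x‖ = max (ρ ‖x‖ / ‖x‖) |deriv ρ ‖x‖| ∧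
      LinearMap.det (fderiv ℝ f x).toLinearMap = deriv ρ ‖x‖ * (ρ ‖x‖ / ‖x‖) ^ (n - 1) := by
  refine ae_of_all _ fun x hx => ?_
  have hr : 0 < ‖x‖ := norm_pos_iff.2 hx
  have hρ : HasDerivAt ρ (deriv ρ ‖x‖) ‖x‖ :=
    ((hρC1.contDiffAt (Ioi_mem_nhds hr)).differentiableAt one_ne_zero).hasDerivAt
  have hfx : HasFDerivAt f (radialCLM (ρ ‖x‖ / ‖x‖) (deriv ρ ‖x‖) (‖x‖⁻¹ • x)) x :=
    (hasFDerivAt_radial hx hρ).congr_of_eventuallyEq ((eventually_ne_nhds hx).mono hf)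
  have hu : ‖‖x‖⁻¹ • x‖ = 1 := norm_smul_inv_norm hx
  obtain ⟨v, hv, huv⟩ := exists_norm_eq_one_inner_eq_zero (by simpa using hn) (‖x‖⁻¹ • x)
  rw [hfx.fderiv]
  refine ⟨hfx.differentiableAt, ?_, ?_⟩
  · rw [norm_radialCLM _ _ hu hv huv, abs_of_pos (div_pos (hρpos _ hr) hr)]
  · rw [det_radialCLM _ _ hu, finrank_euclideanSpace_fin]

/-- For a radial map `f(x) = (x/|x|)·ρ(|x|)` with `ρ` strictly monotone and `C¹` on `(0,∞)`,
for a.e. `x ≠ 0` the operator norm of the derivative is `max{ρ(|x|)/|x|, |ρ'(|x|)|}` and the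
Jacobian determinant is `ρ'(|x|)·(ρ(|x|)/|x|)^{n-1}`. -/
theorem stmt0 (n : ℕ) (hn : 2 ≤ n) (ρ : ℝ → ℝ)
    (hρpos : ∀ r ∈ Set.Ioi (0 : ℝ), 0 < ρ r)
    (hρmono : StrictMonoOn ρ (Set.Ioi 0) ∨ StrictAntiOn ρ (Set.Ioi 0))
    (hρC1 : ContDiffOn ℝ 1 ρ (Set.Ioi 0))
    (f : EuclideanSpace ℝ (Fin n) → EuclideanSpace ℝ (Fin n))
    (hf : ∀ x : EuclideanSpace ℝ (Fin n), x ≠ 0 → f x = (ρ ‖x‖ / ‖x‖) • x) :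
    ∀ᵐ x : EuclideanSpace ℝ (Fin n) ∂volume, x ≠ 0 →
      DifferentiableAt ℝ f x ∧
      ‖fderiv ℝ f x‖ = max (ρ ‖x‖ / ‖x‖) |deriv ρ ‖x‖| ∧
      LinearMap.det (fderiv ℝ f x).toLinearMap = deriv ρ ‖x‖ * (ρ ‖x‖ / ‖x‖) ^ (n - 1) :=
  stmt0_general n hn ρ hρpos hρC1 f hf
end

section
/- Let U ⊂ ℝⁿ be open and bounded, f : closure(U) → ℝⁿ continuous and sense-preserving, and y ∈ f(U) \ f(∂U) with deg(f, U, y) = 1. If a, b ∈ U are two distinct preimages of y and H is a hyperplane strictly separating a and b that splits U into open sets U_a ∋ a and U_b ∋ b, then y ∈ f(H ∩ U). Consequently f⁻¹(y) meets every hyperplane strictly between a and b, and f⁻¹(y) is uncountable. -/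
open Set

/-- If `f` is continuous and sense-preserving on a bounded open `U`, `deg(f,U,y) = 1`, and
`y` has two distinct preimages `a, b ∈ U`, then `y ∈ f(H ∩ U)` for every hyperplane `H`
strictly separating `a` and `b`; consequently `f⁻¹(y)` meets every such hyperplane and
is uncountable. Here `deg` is a Brouwer degree function, assumed to be positive for
sense-preserving data and additive over disjoint open pieces. -/
theorem stmt6 (n : ℕ) (hn : 2 ≤ n) (U : Set (Fin n → ℝ)) (hU : IsOpen U)
    (hUb : Bornology.IsBounded U)
    (f : (Fin n → ℝ) → (Fin n → ℝ)) (hf : ContinuousOn f (closure U))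
    (deg : Set (Fin n → ℝ) → (Fin n → ℝ) → ℤ)
    (hsense : ∀ V : Set (Fin n → ℝ), IsOpen V → V ⊆ U →
      ∀ z ∈ f '' V \ f '' frontier V, 0 < deg V z)
    (hadd : ∀ U₁ U₂ : Set (Fin n → ℝ), IsOpen U₁ → IsOpen U₂ → U₁ ⊆ U → U₂ ⊆ U →
      Disjoint U₁ U₂ → ∀ z ∉ f '' (U \ (U₁ ∪ U₂)), deg U z = deg U₁ z + deg U₂ z)
    (y : Fin n → ℝ) (hy : y ∈ f '' U \ f '' frontier U) (hdeg1 : deg U y = 1)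
    (a b : Fin n → ℝ) (ha : a ∈ U) (hb : b ∈ U) (hab : a ≠ b)
    (hfa : f a = y) (hfb : f b = y) :
    (∀ u : Fin n → ℝ, ∀ t : ℝ, (∑ i, u i * a i) < t → t < (∑ i, u i * b i) →
      y ∈ f '' ({x | (∑ i, u i * x i) = t} ∩ U)) ∧
    ¬ (U ∩ f ⁻¹' {y}).Countable := by
  have main : ∀ u : Fin n → ℝ, ∀ t : ℝ, (∑ i, u i * a i) < t → t < (∑ i, u i * b i) →
      y ∈ f '' ({x | (∑ i, u i * x i) = t} ∩ U) := by
    intro u t hta htb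
    by_contra hcon
    set L : (Fin n → ℝ) → ℝ := fun x => ∑ i, u i * x i with hL
    have hLcont : Continuous L := by
      apply continuous_finset_sum
      intro i _
      exact continuous_const.mul (continuous_apply i)
    set U₁ : Set (Fin n → ℝ) := U ∩ {x | L x < t} with hU₁
    set U₂ : Set (Fin n → ℝ) := U ∩ {x | t < L x} with hU₂
    have hU₁o : IsOpen U₁ := hU.inter (isOpen_lt hLcont continuous_const)
    have hU₂o : IsOpen U₂ := hU.inter (isOpen_lt continuous_const hLcont)
    have hU₁s : U₁ ⊆ U := inter_subset_left
    have hU₂s : U₂ ⊆ U := inter_subset_left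
    have hdisj : Disjoint U₁ U₂ := by
      rw [Set.disjoint_left]
      rintro x ⟨_, hx1⟩ ⟨_, hx2⟩
      have h1 : L x < t := hx1
      have h2 : t < L x := hx2
      linarith
    -- frontier of U₁ / U₂ is inside frontier U ∪ (H ∩ U)
    have hfront : ∀ W : Set (Fin n → ℝ), IsOpen W → W ⊆ U →
        (∀ x ∈ frontier W, x ∈ closure W → True) → True := fun _ _ _ _ => trivial
    have hfr1 : frontier U₁ ⊆ frontier U ∪ ({x | L x = t} ∩ U) := by
      intro x hx
      have hxc : x ∈ closure U₁ := hx.1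
      have hxn : x ∉ U₁ := fun h => hx.2 (by rw [hU₁o.interior_eq]; exact h)
      have hxU : x ∈ closure U := closure_mono hU₁s hxc
      have hxle : L x ≤ t := by
        have : x ∈ closure {x | L x ≤ t} :=
          closure_mono (fun z hz => le_of_lt (show L z < t from hz.2)) hxc
        rwa [IsClosed.closure_eq (isClosed_le hLcont continuous_const)] at this
      by_cases hxU' : x ∈ U
      · right
        refine ⟨le_antisymm hxle ?_, hxU'⟩
        by_contra h
        exact hxn ⟨hxU', lt_of_not_ge h⟩
      · left; exact ⟨hxU, fun h => hxU' (by rw [hU.interior_eq] at h; exact h)⟩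
    have hfr2 : frontier U₂ ⊆ frontier U ∪ ({x | L x = t} ∩ U) := by
      intro x hx
      have hxc : x ∈ closure U₂ := hx.1
      have hxn : x ∉ U₂ := fun h => hx.2 (by rw [hU₂o.interior_eq]; exact h)
      have hxU : x ∈ closure U := closure_mono hU₂s hxc
      have hxle : t ≤ L x := by
        have : x ∈ closure {x | t ≤ L x} :=
          closure_mono (fun z hz => le_of_lt (show t < L z from hz.2)) hxc
        rwa [IsClosed.closure_eq (isClosed_le continuous_const hLcont)] at this
      by_cases hxU' : x ∈ U
      · right
        refine ⟨le_antisymm ?_ hxle, hxU'⟩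
        by_contra h
        exact hxn ⟨hxU', lt_of_not_ge h⟩
      · left; exact ⟨hxU, fun h => hxU' (by rw [hU.interior_eq] at h; exact h)⟩
    have hynotfr : ∀ W : Set (Fin n → ℝ), frontier W ⊆ frontier U ∪ ({x | L x = t} ∩ U) →
        y ∉ f '' frontier W := by
      rintro W hW ⟨x, hxW, hfx⟩
      rcases hW hxW with h | h
      · exact hy.2 ⟨x, h, hfx⟩
      · exact hcon ⟨x, h, hfx⟩
    have hpos1 : 0 < deg U₁ y := by
      apply hsense U₁ hU₁o hU₁s
      exact ⟨⟨a, ⟨ha, hta⟩, hfa⟩, hynotfr U₁ hfr1⟩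
    have hpos2 : 0 < deg U₂ y := by
      apply hsense U₂ hU₂o hU₂s
      exact ⟨⟨b, ⟨hb, htb⟩, hfb⟩, hynotfr U₂ hfr2⟩
    have hynot : y ∉ f '' (U \ (U₁ ∪ U₂)) := by
      rintro ⟨x, ⟨hxU, hxn⟩, hfx⟩
      apply hcon
      refine ⟨x, ⟨?_, hxU⟩, hfx⟩
      rcases lt_trichotomy (L x) t with h | h | h
      · exact absurd (Or.inl ⟨hxU, h⟩) hxn
      · exact h
      · exact absurd (Or.inr ⟨hxU, h⟩) hxn
    have := hadd U₁ U₂ hU₁o hU₂o hU₁s hU₂s hdisj y hynot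
    omega
  refine ⟨main, ?_⟩
  intro hcnt
  set u : Fin n → ℝ := fun i => b i - a i with hu
  set α : ℝ := ∑ i, u i * a i with hα
  set β : ℝ := ∑ i, u i * b i with hβ
  have hαβ : α < β := by
    have : 0 < ∑ i, (b i - a i) * (b i - a i) := by
      apply Finset.sum_pos'
      · intro i _; exact mul_self_nonneg _
      · obtain ⟨i, hi⟩ : ∃ i, a i ≠ b i := by
          by_contra h
          push_neg at h
          exact hab (funext h)
        exact ⟨i, Finset.mem_univ i, mul_self_pos.mpr (sub_ne_zero.mpr (Ne.symm hi))⟩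
    have : 0 < β - α := by
      rw [hβ, hα, ← Finset.sum_sub_distrib]
      simpa [mul_sub] using this
    linarith
  have hsub : Ioo α β ⊆ (fun x => ∑ i, u i * x i) '' (U ∩ f ⁻¹' {y}) := by
    rintro t ⟨ht1, ht2⟩
    obtain ⟨x, ⟨hxH, hxU⟩, hfx⟩ := main u t ht1 ht2
    exact ⟨x, ⟨hxU, by simp [hfx]⟩, hxH⟩
  have : (Ioo α β).Countable := (hcnt.image _).mono hsub
  have h1 : (Cardinal.mk (Ioo α β)) ≤ Cardinal.aleph0 := this.le_aleph0
  rw [Cardinal.mk_Ioo_real hαβ] at h1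
  exact absurd h1 (not_le.mpr Cardinal.aleph0_lt_continuum)
end

section
/- Let G ⊂ ℝⁿ be bounded open, f ∈ C¹ on a neighborhood of closure(G), ψ : ℝⁿ → ℝ Borel measurable and bounded with support avoiding f(∂G). Then ∫_G J_f(x)·ψ(f(x)) dx = ∫_{ℝⁿ} deg(f, G, y)·ψ(y) dy. -/
/-!
`J_f` vanishes off the regular part `W = {x ∈ G | J_f x ≠ 0}`, and by the inverse function
theorem `W` is a disjoint union of countably many measurable sheets, on each of which `f` is
injective and `J_f` has a constant sign `σ`. On a sheet `A` the injective change of variables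
formula gives `∫_A J_f · ψ ∘ f = σ ∫_{f(A)} ψ`; summing over the sheets (absolutely convergent,
since `J_f · ψ ∘ f` is integrable) yields `∫_G J_f · ψ ∘ f = ∫ N ψ`, where at every regular value
`y` of `f` on `G` the number `N y` counts the preimages of `y` with the sign of `J_f`. The
critical values of `f` on `closure G` form a null set (the easy half of Sard's theorem), and at
the remaining points of the support of `ψ` the count `N y` is `deg y`.
-/

open MeasureTheory Set Topology Function

theorem MeasurableSet.exists_partition_of_forall_mem_nhds {X : Type*} [TopologicalSpace X]
    [SecondCountableTopology X] [MeasurableSpace X] [OpensMeasurableSpace X] {W : Set X}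
    (hW : MeasurableSet W) {P : Set X → Prop} (hP : ∀ ⦃s t⦄, s ⊆ t → P t → P s) (hP₀ : P ∅)
    (hloc : ∀ x ∈ W, ∃ U ∈ 𝓝 x, P U) :
    ∃ A : ℕ → Set X, (∀ k, MeasurableSet (A k)) ∧ Pairwise (Disjoint on A) ∧
      ⋃ k, A k = W ∧ ∀ k, P (A k) := by
  choose! U hU hPU using hloc
  obtain ⟨t, htW, htc, hWt⟩ := TopologicalSpace.countable_cover_nhdsWithin
    (f := fun x => interior (U x)) fun x hx => mem_nhdsWithin_of_mem_nhds
      (interior_mem_nhds.2 (hU x hx))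
  -- `∅` is added so that the countable family is nonempty, hence enumerable by `ℕ`.
  obtain ⟨B, hB⟩ := ((htc.image fun x => interior (U x)).insert ∅).exists_eq_range
    (insert_nonempty _ _)
  have hB_open : ∀ k, IsOpen (B k) ∧ P (B k) := by
    intro k
    have hk : B k ∈ range B := mem_range_self k
    rw [← hB] at hk
    rcases hk with hk | ⟨x, hx, hk⟩
    · exact hk ▸ ⟨isOpen_empty, hP₀⟩
    · exact hk ▸ ⟨isOpen_interior, hP interior_subset (hPU x (htW hx))⟩
  refine ⟨disjointed fun k => B k ∩ W,
    .disjointed fun k => (hB_open k).1.measurableSet.inter hW, disjoint_disjointed _, ?_,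
    fun k => hP ((disjointed_subset _ k).trans inter_subset_left) (hB_open k).2⟩
  rw [iUnion_disjointed, ← iUnion_inter, inter_eq_right]
  intro y hy
  obtain ⟨x, hx, hyx⟩ := mem_iUnion₂.1 (hWt hy)
  obtain ⟨k, hk⟩ : interior (U x) ∈ range B := hB ▸ mem_insert_of_mem _ (mem_image_of_mem _ hx)
  exact mem_iUnion.2 ⟨k, hk ▸ hyx⟩

theorem tsum_indicator_image_eq_sum {ι α β M : Type*} [AddCommMonoid M] [TopologicalSpace M]
    [T2Space M] [ContinuousAdd M] {f : α → β} {A : ι → Set α}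
    (hdisj : Pairwise (Disjoint on A)) (hinj : ∀ k, InjOn f (A k)) {φ : α → M} {σ : ι → M}
    (hσ : ∀ k, ∀ x ∈ A k, φ x = σ k) {y : β} {S : Finset α}
    (hS : ↑S = {x | x ∈ ⋃ k, A k ∧ f x = y}) :
    ∑' k, (f '' A k).indicator (fun _ => σ k) y = ∑ x ∈ S, φ x := by
  have hmem : ∀ x, x ∈ S ↔ x ∈ ⋃ k, A k ∧ f x = y := fun x => by
    rw [← Finset.mem_coe, hS]; rfl
  have hsheet : ∀ k, (f '' A k).indicator (fun _ => σ k) y = ∑ x ∈ S, (A k).indicator φ x := by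
    intro k
    by_cases hy : y ∈ f '' A k
    · obtain ⟨x₀, hx₀, rfl⟩ := hy
      rw [indicator_of_mem (mem_image_of_mem f hx₀), Finset.sum_eq_single_of_mem x₀
        ((hmem x₀).2 ⟨mem_iUnion_of_mem k hx₀, rfl⟩), indicator_of_mem hx₀, hσ k x₀ hx₀]
      intro x hx hne
      exact indicator_of_notMem (fun hxk => hne (hinj k hxk hx₀ ((hmem x).1 hx).2)) _
    · rw [indicator_of_notMem hy]
      refine (Finset.sum_eq_zero fun x hx => indicator_of_notMem (fun hxk => hy ?_) _).symm
      exact ⟨x, hxk, ((hmem x).1 hx).2⟩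
  have hsum : ∀ x ∈ S, HasSum (fun k => (A k).indicator φ x) (φ x) := by
    intro x hx
    obtain ⟨k₀, hk₀⟩ := mem_iUnion.1 ((hmem x).1 hx).1
    convert hasSum_single k₀ fun k hk => indicator_of_notMem
      (fun hxk => (hdisj hk).ne_of_mem hxk hk₀ rfl) φ
    rw [indicator_of_mem hk₀]
  rw [tsum_congr hsheet, Summable.tsum_finsetSum fun x hx => (hsum x hx).summable]
  exact Finset.sum_congr rfl fun x hx => (hsum x hx).tsum_eq

section

variable {E : Type*} [NormedAddCommGroup E] [NormedSpace ℝ E] [FiniteDimensional ℝ E]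

theorem ContDiffAt.exists_mem_nhds_injOn_sign_det_eq {f : E → E} {a : E}
    (hf : ContDiffAt ℝ 1 f a) (ha : (fderiv ℝ f a).det ≠ 0) :
    ∃ U ∈ 𝓝 a, InjOn f U ∧
      ∀ x ∈ U, SignType.sign (fderiv ℝ f x).det = SignType.sign (fderiv ℝ f a).det := by
  have hstrict : HasStrictFDerivAt f
      ((fderiv ℝ f a).toContinuousLinearEquivOfDetNeZero ha : E →L[ℝ] E) a := by
    rw [ContinuousLinearMap.coe_toContinuousLinearEquivOfDetNeZero]
    exact hf.hasStrictFDerivAt one_ne_zero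
  have hdet : ContinuousAt (fun x => (fderiv ℝ f x).det) a :=
    ContinuousLinearMap.continuous_det.continuousAt.comp
      (hf.fderiv_right (m := 0) (by norm_num)).continuousAt
  have hsign : ContinuousAt (fun x => SignType.sign (fderiv ℝ f x).det) a :=
    (continuousAt_sign_of_ne_zero ha).comp (f := fun x => (fderiv ℝ f x).det) hdet
  refine ⟨_, Filter.inter_mem hstrict.eventually_left_inverse
    (hsign.eventually_mem ((isOpen_discrete {_}).mem_nhds rfl)), ?_, fun x hx => hx.2⟩
  exact LeftInvOn.injOn fun x hx => hx.1

variable [MeasurableSpace E] [BorelSpace E]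

theorem MeasurableSet.exists_partition_injOn_sign_det_fderiv_eq {W : Set E}
    (hW : MeasurableSet W) {f : E → E} (hf : ∀ x ∈ W, ContDiffAt ℝ 1 f x)
    (hdet : ∀ x ∈ W, (fderiv ℝ f x).det ≠ 0) :
    ∃ (A : ℕ → Set E) (σ : ℕ → SignType), (∀ k, MeasurableSet (A k)) ∧
      Pairwise (Disjoint on A) ∧ ⋃ k, A k = W ∧ (∀ k, InjOn f (A k)) ∧
      ∀ k, ∀ x ∈ A k, SignType.sign (fderiv ℝ f x).det = σ k := by
  obtain ⟨A, hAm, hAdisj, hAW, hAP⟩ := hW.exists_partition_of_forall_mem_nhds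
    (P := fun s => InjOn f s ∧ ∃ σ : SignType, ∀ x ∈ s, SignType.sign (fderiv ℝ f x).det = σ)
    (fun s t hst ht => ⟨ht.1.mono hst, ht.2.imp fun _ h x hx => h x (hst hx)⟩)
    ⟨injOn_empty f, 0, fun _ h => h.elim⟩ fun x hx => by
      obtain ⟨U, hU, hinj, hsign⟩ := (hf x hx).exists_mem_nhds_injOn_sign_det_eq (hdet x hx)
      exact ⟨U, hU, hinj, _, hsign⟩
  choose hinj σ hσ using hAP
  exact ⟨A, σ, hAm, hAdisj, hAW, hinj, hσ⟩

theorem ContDiffOn.integrableOn_det_fderiv_mul_comp {f : E → E} {G V : Set E}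
    (hf : ContDiffOn ℝ 1 f V) (hV : IsOpen V) (hGV : closure G ⊆ V)
    (hGb : Bornology.IsBounded G) (hG : MeasurableSet G) (μ : Measure E)
    [IsFiniteMeasureOnCompacts μ] {g : E → ℝ} (hg : Measurable g) {M : ℝ}
    (hM : ∀ y, |g y| ≤ M) :
    IntegrableOn (fun x => (fderiv ℝ f x).det * g (f x)) G μ := by
  have hdet : IntegrableOn (fun x => (fderiv ℝ f x).det) (closure G) μ :=
    (ContinuousLinearMap.continuous_det.comp_continuousOn
      ((hf.continuousOn_fderiv_of_isOpen hV le_rfl).mono hGV)).integrableOn_compact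
        hGb.isCompact_closure
  refine (hdet.mono_set subset_closure).mul_bdd ?_ (ae_of_all _ fun x => hM (f x))
  exact (hg.comp_aemeasurable ((hf.continuousOn.mono (subset_closure.trans hGV)).aemeasurable
    hG)).aestronglyMeasurable

variable (μ : Measure E) [μ.IsAddHaarMeasure] {f : E → E} {f' : E → E →L[ℝ] E}

theorem ae_forall_det_fderiv_ne_zero {s : Set E}
    (hf' : ∀ x ∈ s, HasFDerivWithinAt f (f' x) s x) :
    ∀ᵐ y ∂μ, ∀ x ∈ s, f x = y → (f' x).det ≠ 0 := by
  have hnull : μ (f '' {x ∈ s | (f' x).det = 0}) = 0 :=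
    addHaar_image_eq_zero_of_det_fderivWithin_eq_zero μ
      (fun x hx => (hf' x hx.1).mono inter_subset_left) fun _ hx => hx.2
  refine measure_mono_null (fun y hy => ?_) hnull
  obtain ⟨x, hx, rfl, h⟩ : ∃ x ∈ s, f x = y ∧ (f' x).det = 0 := by simpa using hy
  exact ⟨x, ⟨hx, h⟩, rfl⟩

theorem setIntegral_det_mul_comp_eq_sign_mul {s : Set E} (hs : MeasurableSet s)
    (hf' : ∀ x ∈ s, HasFDerivWithinAt f (f' x) s x) (hf : InjOn f s) {σ : SignType}
    (hσ : ∀ x ∈ s, SignType.sign (f' x).det = σ) (g : E → ℝ) :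
    ∫ x in s, (f' x).det * g (f x) ∂μ = σ * ∫ y in f '' s, g y ∂μ := by
  rw [integral_image_eq_integral_abs_det_fderiv_smul μ hs hf' hf, ← integral_const_mul]
  refine setIntegral_congr_fun hs fun x hx => ?_
  rw [smul_eq_mul, ← hσ x hx, ← mul_assoc, sign_mul_abs]

theorem setLIntegral_image_enorm_sign_mul_eq {s : Set E} (hs : MeasurableSet s)
    (hf' : ∀ x ∈ s, HasFDerivWithinAt f (f' x) s x) (hf : InjOn f s) {σ : SignType}
    (hσ : ∀ x ∈ s, SignType.sign (f' x).det = σ) (g : E → ℝ) :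
    ∫⁻ y in f '' s, ‖σ * g y‖ₑ ∂μ = ∫⁻ x in s, ‖(f' x).det * g (f x)‖ₑ ∂μ := by
  rw [lintegral_image_eq_lintegral_abs_det_fderiv_mul μ hs hf' hf]
  refine setLIntegral_congr_fun hs fun x hx => ?_
  rw [← hσ x hx, ← Real.enorm_eq_ofReal_abs, ← enorm_mul, ← mul_assoc, self_mul_sign,
    enorm_mul, enorm_mul, Real.enorm_abs]

theorem setIntegral_iUnion_det_mul_comp_eq {A : ℕ → Set E} (hA : ∀ k, MeasurableSet (A k))
    (hdisj : Pairwise (Disjoint on A))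
    (hf' : ∀ x ∈ ⋃ k, A k, HasFDerivWithinAt f (f' x) (⋃ k, A k) x) (hinj : ∀ k, InjOn f (A k))
    {σ : ℕ → SignType} (hσ : ∀ k, ∀ x ∈ A k, SignType.sign (f' x).det = σ k) {g : E → ℝ}
    (hg : Measurable g) (hint : IntegrableOn (fun x => (f' x).det * g (f x)) (⋃ k, A k) μ) :
    ∫ x in ⋃ k, A k, (f' x).det * g (f x) ∂μ =
      ∫ y, (∑' k, (f '' A k).indicator (fun _ => (σ k : ℝ)) y) * g y ∂μ := by
  have hf'k : ∀ k, ∀ x ∈ A k, HasFDerivWithinAt f (f' x) (A k) x := fun k x hx =>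
    (hf' x (mem_iUnion_of_mem k hx)).mono (subset_iUnion A k)
  have hFm : ∀ k, MeasurableSet (f '' A k) := fun k =>
    measurable_image_of_fderivWithin (hA k) (hf'k k) (hinj k)
  set F : ℕ → E → ℝ := fun k => (f '' A k).indicator fun y => σ k * g y
  have hF : (fun y => (∑' k, (f '' A k).indicator (fun _ => (σ k : ℝ)) y) * g y) =
      fun y => ∑' k, F k y := by
    ext y
    simp only [F, ← tsum_mul_right, indicator_mul_left]
  have hF_fin : ∑' k, ∫⁻ y, ‖F k y‖ₑ ∂μ ≠ ⊤ := by
    calc ∑' k, ∫⁻ y, ‖F k y‖ₑ ∂μ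
        = ∑' k, ∫⁻ x in A k, ‖(f' x).det * g (f x)‖ₑ ∂μ := tsum_congr fun k => by
          rw [← setLIntegral_image_enorm_sign_mul_eq μ (hA k) (hf'k k) (hinj k) (hσ k),
            ← lintegral_indicator (hFm k)]
          simp only [F, enorm_indicator_eq_indicator_enorm]
      _ = ∫⁻ x in ⋃ k, A k, ‖(f' x).det * g (f x)‖ₑ ∂μ := (lintegral_iUnion hA hdisj _).symm
      _ ≠ ⊤ := hint.2.ne
  rw [integral_iUnion hA hdisj hint, hF, integral_tsum (f := F)
    (fun k => ((measurable_const.mul hg).indicator (hFm k)).aestronglyMeasurable) hF_fin]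
  refine tsum_congr fun k => ?_
  rw [setIntegral_det_mul_comp_eq_sign_mul μ (hA k) (hf'k k) (hinj k) (hσ k),
    integral_indicator (hFm k), integral_const_mul]

theorem IsOpen.exists_setIntegral_det_fderiv_mul_comp_eq {G : Set E} (hG : IsOpen G)
    (hf : ContDiffOn ℝ 1 f G) :
    ∃ N : E → ℝ, (∀ y (S : Finset E), ↑S = {x ∈ G | f x = y} →
        (∀ x ∈ G, f x = y → (fderiv ℝ f x).det ≠ 0) →
          N y = ∑ x ∈ S, (SignType.sign (fderiv ℝ f x).det : ℝ)) ∧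
      ∀ g : E → ℝ, Measurable g → IntegrableOn (fun x => (fderiv ℝ f x).det * g (f x)) G μ →
        ∫ x in G, (fderiv ℝ f x).det * g (f x) ∂μ = ∫ y, N y * g y ∂μ := by
  have hC1 : ∀ x ∈ G, ContDiffAt ℝ 1 f x := fun x hx => hf.contDiffAt (hG.mem_nhds hx)
  set W := {x ∈ G | (fderiv ℝ f x).det ≠ 0}
  have hWG : W ⊆ G := sep_subset _ _
  have hW : IsOpen W :=
    (ContinuousLinearMap.continuous_det.comp_continuousOn
      (hf.continuousOn_fderiv_of_isOpen hG le_rfl)).isOpen_inter_preimage hG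
        isOpen_compl_singleton
  obtain ⟨A, σ, hAm, hAdisj, hAW, hinj, hσ⟩ :=
    hW.measurableSet.exists_partition_injOn_sign_det_fderiv_eq (fun x hx => hC1 x hx.1)
      fun x hx => hx.2
  refine ⟨fun y => ∑' k, (f '' A k).indicator (fun _ => (σ k : ℝ)) y,
    fun y S hS hreg => tsum_indicator_image_eq_sum hAdisj hinj
      (φ := fun x => (SignType.sign (fderiv ℝ f x).det : ℝ))
      (fun k x hx => congrArg _ (hσ k x hx)) ?_,
    fun g hg hint => ?_⟩
  · rw [hAW, hS]
    ext x
    exact ⟨fun h => ⟨⟨h.1, hreg x h.1 h.2⟩, h.2⟩, fun h => ⟨h.1.1, h.2⟩⟩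
  calc ∫ x in G, (fderiv ℝ f x).det * g (f x) ∂μ
      = ∫ x in ⋃ k, A k, (fderiv ℝ f x).det * g (f x) ∂μ := by
        rw [hAW]
        refine setIntegral_eq_of_subset_of_forall_sdiff_eq_zero hG.measurableSet hWG
          fun x hx => ?_
        rw [not_ne_iff.1 fun h => hx.2 ⟨hx.1, h⟩, zero_mul]
    _ = _ := by
        refine setIntegral_iUnion_det_mul_comp_eq μ hAm hAdisj (fun x hx => ?_) hinj hσ hg
          (hAW ▸ hint.mono_set hWG)
        exact ((hC1 x (hWG (hAW ▸ hx))).differentiableAt one_ne_zero).hasFDerivAt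
          |>.hasFDerivWithinAt

end

theorem stmt17_general (n : ℕ) (G : Set (Fin n → ℝ)) (hG : IsOpen G)
    (hGb : Bornology.IsBounded G)
    (f : (Fin n → ℝ) → (Fin n → ℝ))
    (hf : ∃ V : Set (Fin n → ℝ), IsOpen V ∧ closure G ⊆ V ∧ ContDiffOn ℝ 1 f V)
    (ψ : (Fin n → ℝ) → ℝ) (hψm : Measurable ψ) (hψb : ∃ M : ℝ, ∀ y, |ψ y| ≤ M)
    (hψsupp : ∀ y, ψ y ≠ 0 → y ∉ f '' frontier G)
    (deg : (Fin n → ℝ) → ℤ)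
    (hdeg : ∀ y : Fin n → ℝ, y ∉ f '' frontier G →
      (∀ x ∈ closure G, f x = y → LinearMap.det (fderiv ℝ f x).toLinearMap ≠ 0) →
      ∃ S : Finset (Fin n → ℝ), (↑S = {x ∈ G | f x = y}) ∧
        deg y = ∑ x ∈ S, (SignType.sign (LinearMap.det (fderiv ℝ f x).toLinearMap) : ℤ)) :
    ∫ x in G, LinearMap.det (fderiv ℝ f x).toLinearMap * ψ (f x) =
      ∫ y, (deg y : ℝ) * ψ y := by
  obtain ⟨V, hV, hGV, hfV⟩ := hf
  obtain ⟨M, hM⟩ := hψb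
  obtain ⟨N, hN, hN_integral⟩ :=
    hG.exists_setIntegral_det_fderiv_mul_comp_eq volume (hfV.mono (subset_closure.trans hGV))
  rw [hN_integral ψ hψm
    (hfV.integrableOn_det_fderiv_mul_comp hV hGV hGb hG.measurableSet volume hψm hM)]
  have hreg := ae_forall_det_fderiv_ne_zero volume fun x hx =>
    ((hfV.contDiffAt (hV.mem_nhds (hGV hx))).differentiableAt one_ne_zero).hasFDerivAt
      |>.hasFDerivWithinAt
  refine integral_congr_ae <| hreg.mono fun y hy => ?_
  by_cases hψy : ψ y = 0
  · simp [hψy]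
  obtain ⟨S, hS, hdeg_y⟩ := hdeg y (hψsupp y hψy) hy
  change N y * ψ y = (deg y : ℝ) * ψ y
  rw [hN y S hS fun x hx => hy x (subset_closure hx), hdeg_y]
  push_cast [SignType.intCast_cast]
  rfl

/-- Change of variables via the degree for `C¹` maps: if `G` is bounded open, `f` is `C¹`
on a neighborhood of `closure G`, and `ψ` is a bounded Borel function whose support avoids
`f(∂G)`, then `∫_G J_f(x)ψ(f(x)) dx = ∫_{ℝⁿ} deg(f,G,y)ψ(y) dy`. Here `deg` is the
Brouwer degree, characterized at regular values by the sum of the signs of the Jacobian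
over the (finite) preimage set. -/
theorem stmt17 (n : ℕ) (hn : 2 ≤ n) (G : Set (Fin n → ℝ)) (hG : IsOpen G)
    (hGb : Bornology.IsBounded G)
    (f : (Fin n → ℝ) → (Fin n → ℝ))
    (hf : ∃ V : Set (Fin n → ℝ), IsOpen V ∧ closure G ⊆ V ∧ ContDiffOn ℝ 1 f V)
    (ψ : (Fin n → ℝ) → ℝ) (hψm : Measurable ψ) (hψb : ∃ M : ℝ, ∀ y, |ψ y| ≤ M)
    (hψsupp : ∀ y, ψ y ≠ 0 → y ∉ f '' frontier G)
    (deg : (Fin n → ℝ) → ℤ)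
    (hdeg : ∀ y : Fin n → ℝ, y ∉ f '' frontier G →
      (∀ x ∈ closure G, f x = y → LinearMap.det (fderiv ℝ f x).toLinearMap ≠ 0) →
      ∃ S : Finset (Fin n → ℝ), (↑S = {x ∈ G | f x = y}) ∧
        deg y = ∑ x ∈ S, (SignType.sign (LinearMap.det (fderiv ℝ f x).toLinearMap) : ℤ)) :
    ∫ x in G, LinearMap.det (fderiv ℝ f x).toLinearMap * ψ (f x) =
      ∫ y, (deg y : ℝ) * ψ y :=
  stmt17_general n G hG hGb f hf ψ hψm hψb hψsupp deg hdeg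
end

section
/- Let f : (0,1)^{n-1} → ℝⁿ satisfy the scaling-invariant Hölder bound on every subcube Q of sidelength 1/N: sup_{x,y∈Q} |f(x)-f(y)| ≤ C ( [f]_{s,p;Q}^p )^{1/p} · (1/N)^{s-(n-1)/p} with p = n/s, and assume the total Gagliardo seminorm [f]_{s,p;(0,1)^{n-1}}^p = M < ∞ and s > n/(n+1). Then for the oscillation-sum over any division into N^{n-1} subcubes: Σ_Q (osc_Q f)^n ≤ C M^s N^{(n-1)(1-s)-s} → 0 as N → ∞. Consequently |f((0,1)^{n-1})| = 0 in ℝⁿ. -/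
/-!
On a subcube `Q` of side `1/N`, the Hölder bound with `p = n/s` gives
`(osc_Q f)ⁿ ≤ C₀ⁿ [f]_Q^s N^{-s}`. Summing over the `N^{n-1}` subcubes, Hölder's inequality
`∑ a_Q^s ≤ (#Q)^{1-s} (∑ a_Q)^s` and superadditivity of the seminorm over the almost disjoint
products `Q × Q` bound the sum by `C₀ⁿ M^s N^{(n-1)(1-s)-s}`; the exponent is negative because
`s > n/(n+1) > (n-1)/n`. A subset of `ℝⁿ` of diameter `δ` has measure at most `δⁿ`, so the image
of the cube is covered by sets of total measure tending to `0`.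
-/

open MeasureTheory Set

/-- The open unit cube `(0,1)^d` of `ℝ^d`. -/
def openUnitCube (d : ℕ) : Set (Fin d → ℝ) :=
  Set.univ.pi fun _ => Set.Ioo (0 : ℝ) 1

/-- The subcube of the unit cube of `ℝ^d` of sidelength `1/N` indexed by
`m : Fin d → Fin N`. -/
def subcube (d N : ℕ) (m : Fin d → Fin N) : Set (Fin d → ℝ) :=
  {x | ∀ i, (m i : ℝ) / N ≤ x i ∧ x i ≤ ((m i : ℝ) + 1) / N}

/-- The Gagliardo `(s,p)`-seminorm (raised to the power `p`) of
`f : ℝ^d → ℝ^n` over a set `S`, with kernel `|x-y|^{-(d+sp)}`. -/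
noncomputable def gagliardoP (d n : ℕ) (s p : ℝ)
    (f : (Fin d → ℝ) → (Fin n → ℝ)) (S : Set (Fin d → ℝ)) : ℝ :=
  ∫ z in S ×ˢ S, ‖f z.1 - f z.2‖ ^ p / ‖z.1 - z.2‖ ^ ((d : ℝ) + s * p)

open Filter Topology Function
open scoped ENNReal

theorem subcube_eq_pi (d N : ℕ) (m : Fin d → Fin N) :
    subcube d N m = univ.pi fun i => Icc ((m i : ℝ) / N) (((m i : ℝ) + 1) / N) := by
  ext x
  simp only [subcube, mem_ofPred_eq, mem_univ_pi, mem_Icc]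

theorem measurableSet_subcube (d N : ℕ) (m : Fin d → Fin N) : MeasurableSet (subcube d N m) := by
  rw [subcube_eq_pi]
  exact .univ_pi fun _ => measurableSet_Icc

theorem measurableSet_openUnitCube (d : ℕ) : MeasurableSet (openUnitCube d) :=
  .univ_pi fun _ => measurableSet_Ioo

theorem volume_subcube_inter_subcube_of_lt {d N : ℕ} {m m' : Fin d → Fin N} {i : Fin d}
    (h : m i < m' i) : volume (subcube d N m ∩ subcube d N m') = 0 := by
  have hface : subcube d N m ∩ subcube d N m' ⊆
      univ.pi (update (fun _ => univ) i {(m' i : ℝ) / N}) := by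
    rintro x ⟨hx, hx'⟩ j -
    rcases eq_or_ne j i with rfl | hj
    · have hle : ((m j : ℝ) + 1) / N ≤ (m' j : ℝ) / N := by
        gcongr
        exact_mod_cast Nat.succ_le_of_lt h
      simpa using le_antisymm ((hx j).2.trans hle) (hx' j).1
    · simp [hj]
  refine measure_mono_null hface ?_
  rw [volume_pi_pi]
  exact Finset.prod_eq_zero (Finset.mem_univ i) (by simp)

theorem aedisjoint_subcube {d N : ℕ} {m m' : Fin d → Fin N} (h : m ≠ m') :
    AEDisjoint volume (subcube d N m) (subcube d N m') := by
  obtain ⟨i, hi⟩ := ne_iff.mp h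
  rcases lt_or_gt_of_ne hi with hlt | hgt
  · exact volume_subcube_inter_subcube_of_lt hlt
  · rw [AEDisjoint, inter_comm]
    exact volume_subcube_inter_subcube_of_lt hgt

theorem openUnitCube_subset_iUnion_subcube {d N : ℕ} (hN : 0 < N) :
    openUnitCube d ⊆ ⋃ m : Fin d → Fin N, subcube d N m ∩ openUnitCube d := by
  intro x hx
  have hNR : (0 : ℝ) < N := Nat.cast_pos.mpr hN
  have hx01 : ∀ i, 0 < x i ∧ x i < 1 := fun i => hx i (mem_univ i)
  have hfloor : ∀ i, ⌊N * x i⌋₊ < N := fun i =>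
    (Nat.floor_lt (by nlinarith [hx01 i])).mpr (by nlinarith [hx01 i])
  refine mem_iUnion.mpr ⟨fun i => ⟨⌊N * x i⌋₊, hfloor i⟩, fun i => ⟨?_, ?_⟩, hx⟩
  · rw [div_le_iff₀ hNR, mul_comm]
    exact Nat.floor_le (by nlinarith [hx01 i])
  · rw [le_div_iff₀ hNR, mul_comm]
    exact (Nat.lt_floor_add_one _).le

theorem MeasureTheory.AEDisjoint.prod {α β : Type*} [MeasurableSpace α] [MeasurableSpace β]
    {μ : Measure α} (ν : Measure β) [SFinite ν] {s s' : Set α} (h : AEDisjoint μ s s') (t t' : Set β) :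
    AEDisjoint (μ.prod ν) (s ×ˢ t) (s' ×ˢ t') := by
  rw [AEDisjoint, prod_inter_prod, Measure.prod_prod, h, zero_mul]

theorem MeasureTheory.sum_setIntegral_le_setIntegral {α ι : Type*} [MeasurableSpace α]
    [Fintype ι] {μ : Measure α} {T : ι → Set α} {U : Set α} {G : α → ℝ} (hG : 0 ≤ᵐ[μ.restrict U] G)
    (hT : ∀ i, NullMeasurableSet (T i) μ) (hdisj : Pairwise (AEDisjoint μ on T))
    (hTU : ∀ i, T i ⊆ U) (hint : IntegrableOn G U μ) :
    ∑ i, ∫ x in T i, G x ∂μ ≤ ∫ x in U, G x ∂μ := calc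
  ∑ i, ∫ x in T i, G x ∂μ = ∫ x in ⋃ i, T i, G x ∂μ := by
    rw [integral_iUnion_ae hT hdisj (hint.mono_set (iUnion_subset hTU)), tsum_fintype]
  _ ≤ ∫ x in U, G x ∂μ := setIntegral_mono_set hint hG (iUnion_subset hTU).eventuallyLE

theorem gagliardoP_nonneg (d n : ℕ) (s p : ℝ) (f : (Fin d → ℝ) → (Fin n → ℝ))
    (S : Set (Fin d → ℝ)) : 0 ≤ gagliardoP d n s p f S :=
  integral_nonneg fun _ => div_nonneg (by positivity) (by positivity)

theorem sum_gagliardoP_subcube_le {d n N : ℕ} {s p : ℝ} {f : (Fin d → ℝ) → (Fin n → ℝ)}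
    (hint : IntegrableOn (fun z : (Fin d → ℝ) × (Fin d → ℝ) =>
        ‖f z.1 - f z.2‖ ^ p / ‖z.1 - z.2‖ ^ ((d : ℝ) + s * p))
      (openUnitCube d ×ˢ openUnitCube d)) :
    ∑ m : Fin d → Fin N, gagliardoP d n s p f (subcube d N m ∩ openUnitCube d) ≤
      gagliardoP d n s p f (openUnitCube d) := by
  have hQ : ∀ m, MeasurableSet (subcube d N m ∩ openUnitCube d) := fun m =>
    (measurableSet_subcube d N m).inter (measurableSet_openUnitCube d)
  refine sum_setIntegral_le_setIntegral (.of_forall fun _ => by positivity)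
    (fun m => ((hQ m).prod (hQ m)).nullMeasurableSet) (fun m m' hm => ?_)
    (fun m => prod_mono inter_subset_right inter_subset_right) hint
  exact ((aedisjoint_subcube hm).mono (inter_subset_left (t := openUnitCube d))
    inter_subset_left).prod volume _ _

theorem sum_rpow_le_card_rpow_mul_rpow {ι : Type*} [Fintype ι] {a : ι → ℝ} (ha : ∀ i, 0 ≤ a i)
    {t : ℝ} (ht₀ : 0 < t) (ht₁ : t ≤ 1) :
    ∑ i, a i ^ t ≤ (Fintype.card ι : ℝ) ^ (1 - t) * (∑ i, a i) ^ t := by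
  have holder := Real.inner_le_weight_mul_Lp_of_nonneg Finset.univ (one_le_inv₀ ht₀ |>.mpr ht₁)
    (fun _ => 1) (fun i => a i ^ t) (fun _ => zero_le_one) (fun i => Real.rpow_nonneg (ha i) t)
  simpa [inv_inv, ← Real.rpow_mul (ha _), mul_inv_cancel₀ ht₀.ne'] using holder

theorem holder_bound_pow_eq {n d : ℕ} (hn : 0 < n) {s p C g h : ℝ} (hs : 0 < s)
    (hp : p = n / s) (hg : 0 ≤ g) (hh : 0 ≤ h) :
    (C * g ^ (1 / p) * h ^ (s - d / p)) ^ n = C ^ n * g ^ s * h ^ (s * (n - d)) := by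
  have hnR : (n : ℝ) ≠ 0 := Nat.cast_ne_zero.mpr hn.ne'
  have hg_exp : 1 / p * n = s := by
    rw [hp]; field_simp
  have hh_exp : (s - d / p) * n = s * (n - d) := by
    rw [hp]; field_simp
  rw [mul_pow, mul_pow, ← Real.rpow_mul_natCast hg, ← Real.rpow_mul_natCast hh, hg_exp, hh_exp]

theorem sum_holder_bound_pow_le {n d N : ℕ} (hn : 0 < n) (hN : 0 < N) {s p C M : ℝ}
    (hC : 0 ≤ C) (hs₀ : 0 < s) (hs₁ : s ≤ 1) (hp : p = n / s) {g : (Fin d → Fin N) → ℝ}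
    (hg : ∀ m, 0 ≤ g m) (hgM : ∑ m, g m ≤ M) :
    ∑ m, (C * g m ^ (1 / p) * ((1 : ℝ) / N) ^ (s - d / p)) ^ n ≤
      C ^ n * M ^ s * (N : ℝ) ^ (d * (1 - s) - s * (n - d)) := by
  have hNR : (0 : ℝ) < N := Nat.cast_pos.mpr hN
  have hcard : (Fintype.card (Fin d → Fin N) : ℝ) = (N : ℝ) ^ (d : ℝ) := by
    simp
  have hscale : ((1 : ℝ) / N) ^ (s * (n - d)) * ((N : ℝ) ^ (d : ℝ)) ^ (1 - s) =
      (N : ℝ) ^ (d * (1 - s) - s * (n - d)) := by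
    rw [one_div, Real.inv_rpow hNR.le, ← Real.rpow_neg hNR.le, ← Real.rpow_mul hNR.le,
      ← Real.rpow_add hNR]
    ring_nf
  calc ∑ m, (C * g m ^ (1 / p) * ((1 : ℝ) / N) ^ (s - d / p)) ^ n
      = C ^ n * ((1 : ℝ) / N) ^ (s * (n - d)) * ∑ m, g m ^ s := by
        simp only [holder_bound_pow_eq hn hs₀ hp (hg _) (one_div_nonneg.mpr hNR.le),
          Finset.mul_sum]
        exact Finset.sum_congr rfl fun _ _ => by ring
    _ ≤ C ^ n * ((1 : ℝ) / N) ^ (s * (n - d)) *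
        ((Fintype.card (Fin d → Fin N) : ℝ) ^ (1 - s) * M ^ s) := by
        refine mul_le_mul_of_nonneg_left ((sum_rpow_le_card_rpow_mul_rpow hg hs₀ hs₁).trans ?_)
          (by positivity)
        gcongr
        exact Finset.sum_nonneg fun m _ => hg m
    _ = C ^ n * M ^ s * (N : ℝ) ^ (d * (1 - s) - s * (n - d)) := by
        rw [hcard, ← hscale]
        ring

theorem ediam_image_le_of_norm_sub_le {α E : Type*} [SeminormedAddCommGroup E] {f : α → E}
    {S : Set α} {B : ℝ} (hB : 0 ≤ B) (h : ∀ x ∈ S, ∀ y ∈ S, ‖f x - f y‖ ≤ B) :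
    Metric.ediam (f '' S) ≤ ENNReal.ofReal B :=
  Metric.ediam_image_le_iff.mpr fun x hx y hy => by
    rw [edist_le_ofReal hB, dist_eq_norm]
    exact h x hx y hy

theorem volume_le_ofReal_sum_pow_of_subset_iUnion {ι κ : Type*} [Fintype ι] [Fintype κ]
    {S : Set (ι → ℝ)} {A : κ → Set (ι → ℝ)} {r : κ → ℝ} (hS : S ⊆ ⋃ k, A k)
    (hr : ∀ k, 0 ≤ r k) (hA : ∀ k, Metric.ediam (A k) ≤ ENNReal.ofReal (r k)) :
    volume S ≤ ENNReal.ofReal (∑ k, r k ^ Fintype.card ι) := calc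
  volume S ≤ ∑ k, volume (A k) := (measure_mono hS).trans (measure_iUnion_fintype_le _ _)
  _ ≤ ∑ k, ENNReal.ofReal (r k) ^ Fintype.card ι := Finset.sum_le_sum fun k _ =>
    (Real.volume_pi_le_diam_pow _).trans (pow_le_pow_left' (hA k) _)
  _ = ENNReal.ofReal (∑ k, r k ^ Fintype.card ι) := by
    rw [ENNReal.ofReal_sum_of_nonneg fun k _ => pow_nonneg (hr k) _]
    simp only [ENNReal.ofReal_pow (hr _)]

theorem sub_one_mul_one_sub_sub_neg {n : ℕ} {s : ℝ} (hs₀ : (n : ℝ) / (n + 1) < s) (hs₁ : s < 1) :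
    ((n : ℝ) - 1) * (1 - s) - s < 0 := by
  have := (div_lt_iff₀ (by positivity)).mp hs₀
  nlinarith

theorem ENNReal.eq_zero_of_forall_le_ofReal_mul_rpow {a : ℝ≥0∞} {K e : ℝ} (he : e < 0)
    (h : ∀ N : ℕ, 0 < N → a ≤ ENNReal.ofReal (K * (N : ℝ) ^ e)) : a = 0 := by
  have hpow : Tendsto (fun N : ℕ => (N : ℝ) ^ e) atTop (𝓝 0) := by
    simpa [comp_def] using
      (tendsto_rpow_neg_atTop (neg_pos.mpr he)).comp tendsto_natCast_atTop_atTop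
  have hlim : Tendsto (fun N : ℕ => ENNReal.ofReal (K * (N : ℝ) ^ e)) atTop (𝓝 0) := by
    simpa using ENNReal.tendsto_ofReal (hpow.const_mul K)
  exact nonpos_iff_eq_zero.mp (ge_of_tendsto hlim (eventually_atTop.mpr ⟨1, h⟩))

/-- If `f : (0,1)^{n-1} → ℝⁿ` satisfies the scaling-invariant Hölder bound on each subcube
of sidelength `1/N` (with `p = n/s`), its total Gagliardo seminorm is `M < ∞` and
`s > n/(n+1)`, then the oscillation sums satisfy
`Σ_Q (osc_Q f)^n ≤ C M^s N^{(n-1)(1-s)-s} → 0`, and consequently `|f((0,1)^{n-1})| = 0`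
in `ℝⁿ`. -/
theorem stmt18 (n : ℕ) (hn : 2 ≤ n) (s p : ℝ)
    (hs : s ∈ Set.Ioo ((n : ℝ) / ((n : ℝ) + 1)) 1) (hp : p = (n : ℝ) / s)
    (f : (Fin (n - 1) → ℝ) → (Fin n → ℝ)) (C₀ M : ℝ) (hC₀ : 0 < C₀)
    (hM : gagliardoP (n - 1) n s p f (openUnitCube (n - 1)) = M)
    (hint : IntegrableOn
      (fun z : (Fin (n - 1) → ℝ) × (Fin (n - 1) → ℝ) =>
        ‖f z.1 - f z.2‖ ^ p / ‖z.1 - z.2‖ ^ (((n : ℝ) - 1) + s * p))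
      (openUnitCube (n - 1) ×ˢ openUnitCube (n - 1)))
    (hhold : ∀ N : ℕ, 0 < N → ∀ m : Fin (n - 1) → Fin N,
      ∀ x ∈ subcube (n - 1) N m ∩ openUnitCube (n - 1),
      ∀ y ∈ subcube (n - 1) N m ∩ openUnitCube (n - 1),
        ‖f x - f y‖ ≤
          C₀ * (gagliardoP (n - 1) n s p f (subcube (n - 1) N m ∩ openUnitCube (n - 1)))
              ^ (1 / p) * ((1 : ℝ) / N) ^ (s - ((n : ℝ) - 1) / p)) :
    (∃ C > (0 : ℝ), ∀ N : ℕ, 0 < N →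
      ∑ m : Fin (n - 1) → Fin N,
          (Metric.diam (f '' (subcube (n - 1) N m ∩ openUnitCube (n - 1)))) ^ n ≤
        C * M ^ s * (N : ℝ) ^ (((n : ℝ) - 1) * (1 - s) - s)) ∧
    volume (f '' openUnitCube (n - 1)) = 0 := by
  obtain ⟨hs₀, hs₁⟩ := hs
  have hs_pos : 0 < s := lt_trans (by positivity) hs₀
  have hd : ((n - 1 : ℕ) : ℝ) = n - 1 := by rw [Nat.cast_sub (by omega), Nat.cast_one]
  set U := openUnitCube (n - 1)
  set B : ∀ N : ℕ, (Fin (n - 1) → Fin N) → ℝ := fun N m =>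
    C₀ * gagliardoP (n - 1) n s p f (subcube (n - 1) N m ∩ U) ^ (1 / p) *
      ((1 : ℝ) / N) ^ (s - ((n : ℝ) - 1) / p)
  have hB : ∀ N m, 0 ≤ B N m := fun N m => by
    have := gagliardoP_nonneg (n - 1) n s p f (subcube (n - 1) N m ∩ U)
    positivity
  have hsum : ∀ N : ℕ, 0 < N →
      ∑ m, B N m ^ n ≤ C₀ ^ n * M ^ s * (N : ℝ) ^ (((n : ℝ) - 1) * (1 - s) - s) := by
    intro N hN
    have hgM := hM ▸ sum_gagliardoP_subcube_le (N := N) (by rwa [hd])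
    have key := sum_holder_bound_pow_le (by omega) hN hC₀.le hs_pos hs₁.le hp
      (fun m => gagliardoP_nonneg _ _ _ _ _ _) hgM
    rw [hd] at key
    convert key using 3
    ring
  have hdiam : ∀ N : ℕ, 0 < N → ∀ m, Metric.ediam (f '' (subcube (n - 1) N m ∩ U)) ≤
      ENNReal.ofReal (B N m) := fun N hN m =>
    ediam_image_le_of_norm_sub_le (hB N m) (hhold N hN m)
  refine ⟨⟨C₀ ^ n, by positivity, fun N hN => (Finset.sum_le_sum fun m _ => ?_).trans (hsum N hN)⟩,
    ?_⟩
  · exact pow_le_pow_left₀ Metric.diam_nonneg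
      (ENNReal.toReal_le_of_le_ofReal (hB N m) (hdiam N hN m)) n
  refine ENNReal.eq_zero_of_forall_le_ofReal_mul_rpow (K := C₀ ^ n * M ^ s)
    (sub_one_mul_one_sub_sub_neg hs₀ hs₁) fun N hN => ?_
  have hcover : f '' U ⊆ ⋃ m, f '' (subcube (n - 1) N m ∩ U) :=
    (image_mono (openUnitCube_subset_iUnion_subcube hN)).trans image_iUnion.subset
  calc volume (f '' U) ≤ ENNReal.ofReal (∑ m, B N m ^ n) := by
        simpa using volume_le_ofReal_sum_pow_of_subset_iUnion hcover (hB N) (hdiam N hN)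
    _ ≤ _ := ENNReal.ofReal_le_ofReal (hsum N hN)
end
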